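/- The infinite series ∑_{k=0}^∞ (6k+1) · ((1/2)_k)^3 / (k!^3 · 4^k) equals 4/π, where (x)_k denotes the Pochhammer (rising factorial) symbol. -/

import Mathlib

/-!
With `W n k = (1/2)_k³ (1/2)_n² / (k! (n+k)!² 4^k)`, put `F n k = (6k + 4n + 1) W n k` and
`G n k = 8k W n k`. Then `F 0 k` is the `k`-th term of the series, and `(F, G)` is a
Wilf–Zeilberger pair: `F (n+1) k - F n k = G n (k+1) - G n k`. Summing over `k` telescopes, so
`∑ₖ F n k` does not depend on `n`. As `n → ∞` the terms with `k ≥ 1` are `O(4⁻ᵏ k / n)`, while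
`F n 0 = (4n + 1) ((1/2)_n / n!)²` tends to `4/π` by Wallis' product.
-/

open Real

noncomputable def poch (x : ℝ) (k : ℕ) : ℝ := ∏ i ∈ Finset.range k, (x + i)

noncomputable def H2 (n : ℕ) : ℝ := ∑ i ∈ Finset.range n, 1 / ((i : ℝ) + 1) ^ 2

open Filter Topology Nat

section Telescoping

variable {E : Type*} [AddCommGroup E] [TopologicalSpace E] [IsTopologicalAddGroup E] [T2Space E]

theorem hasSum_succ_sub_of_tendsto {g : ℕ → E} {l : E} (hs : Summable fun k => g (k + 1) - g k)
    (hg : Tendsto g atTop (𝓝 l)) : HasSum (fun k => g (k + 1) - g k) (l - g 0) :=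
  hs.hasSum_iff_tendsto_nat.2 <| by simpa only [Finset.sum_range_sub] using hg.sub_const (g 0)

theorem tsum_eq_tsum_zero_of_wz {F G : ℕ → ℕ → E} (hF : ∀ n, Summable (F n))
    (hFG : ∀ n k, F (n + 1) k - F n k = G n (k + 1) - G n k) (hG₀ : ∀ n, G n 0 = 0)
    (hG : ∀ n, Tendsto (G n) atTop (𝓝 0)) (n : ℕ) : ∑' k, F n k = ∑' k, F 0 k := by
  induction n with
  | zero => rfl
  | succ n ih =>
    have hs : Summable fun k => G n (k + 1) - G n k := by
      simpa only [hFG] using (hF (n + 1)).sub (hF n)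
    have hdiff : HasSum (fun k => F (n + 1) k - F n k) 0 := by
      simpa only [hFG, hG₀, sub_self] using hasSum_succ_sub_of_tendsto hs (hG n)
    rw [← ih, ← sub_eq_zero, ← (hF (n + 1)).tsum_sub (hF n), hdiff.tsum_eq]

end Telescoping

theorem summable_linear_mul_geometric {r : ℝ} (hr : |r| < 1) (a b : ℝ) :
    Summable fun k : ℕ => (a * k + b) * r ^ k := by
  have h₁ := (summable_pow_mul_geometric_of_norm_lt_one 1 hr).mul_left a
  have h₀ := (summable_geometric_of_abs_lt_one hr).mul_left b
  simpa only [pow_one, add_mul, mul_assoc] using h₁.add h₀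

theorem poch_zero (x : ℝ) : poch x 0 = 1 := Finset.prod_range_zero _

theorem poch_succ (x : ℝ) (n : ℕ) : poch x (n + 1) = poch x n * (x + n) :=
  Finset.prod_range_succ _ _

theorem poch_pos {x : ℝ} (hx : 0 < x) (n : ℕ) : 0 < poch x n :=
  Finset.prod_pos fun _ _ => by positivity

theorem poch_le_factorial {x : ℝ} (hx₀ : 0 ≤ x) (hx₁ : x ≤ 1) (n : ℕ) : poch x n ≤ n ! := by
  induction n with
  | zero => simp [poch_zero]
  | succ n ih =>
    rw [poch_succ, factorial_succ, cast_mul, mul_comm ((n + 1 : ℕ) : ℝ)]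
    exact mul_le_mul ih (by push_cast; linarith) (by positivity) (by positivity)

theorem two_mul_add_one_mul_sq_mul_wallis (n : ℕ) :
    (2 * n + 1) * (poch (1 / 2) n / n !) ^ 2 * Wallis.W n = 1 := by
  induction n with
  | zero => simp [poch_zero, Wallis.W]
  | succ n ih =>
    have h₁ : (2 * n + 1 : ℝ) ≠ 0 := by positivity
    have h₂ : (2 * n + 3 : ℝ) ≠ 0 := by positivity
    have h₃ : (n ! : ℝ) ≠ 0 := by positivity
    refine Eq.trans ?_ ih
    rw [Wallis.W_succ, poch_succ, factorial_succ]
    push_cast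
    field_simp
    ring

theorem tendsto_four_mul_add_one_mul_sq :
    Tendsto (fun n : ℕ => (4 * n + 1) * (poch (1 / 2) n / n !) ^ 2) atTop (𝓝 (4 / π)) := by
  have hodd : Tendsto (fun n : ℕ => (2 * n + 1) * (poch (1 / 2) n / n !) ^ 2) atTop (𝓝 (2 / π)) := by
    have := Wallis.tendsto_W_nhds_pi_div_two.inv₀ (by positivity)
    rw [inv_div] at this
    refine this.congr fun n => ?_
    rw [eq_comm, ← mul_eq_one_iff_eq_inv₀ (Wallis.W_pos n).ne']
    exact two_mul_add_one_mul_sq_mul_wallis n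
  have hsq : Tendsto (fun n : ℕ => (poch (1 / 2) n / n !) ^ 2) atTop (𝓝 0) := by
    have hinv : Tendsto (fun n : ℕ => (2 * (n : ℝ) + 1)⁻¹) atTop (𝓝 0) :=
      tendsto_inv_atTop_zero.comp <| tendsto_atTop_add_const_right _ _ <|
        tendsto_natCast_atTop_atTop.const_mul_atTop two_pos
    simpa using (hodd.mul hinv).congr fun n => by field_simp
  convert (hodd.const_mul 2).sub hsq using 1 <;> ring_nf

namespace RamanujanWZ

noncomputable def W (n k : ℕ) : ℝ :=
  poch (1 / 2) k ^ 3 * poch (1 / 2) n ^ 2 / (k ! * (n + k)! ^ 2 * 4 ^ k)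

noncomputable def F (n k : ℕ) : ℝ := (6 * k + 4 * n + 1) * W n k

noncomputable def G (n k : ℕ) : ℝ := 8 * k * W n k

theorem W_pos (n k : ℕ) : 0 < W n k := by
  have := poch_pos (one_half_pos (α := ℝ)) n
  have := poch_pos (one_half_pos (α := ℝ)) k
  unfold W
  positivity

theorem W_succ_left (n k : ℕ) :
    W (n + 1) k = W n k * ((n + 1 / 2) ^ 2 / (n + k + 1) ^ 2) := by
  rw [W, W, poch_succ, add_right_comm, factorial_succ]
  push_cast
  field_simp
  ring

theorem W_succ_right (n k : ℕ) :
    W n (k + 1) = W n k * ((k + 1 / 2) ^ 3 / (4 * (k + 1) * (n + k + 1) ^ 2)) := by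
  rw [W, W, poch_succ, ← add_assoc, factorial_succ, factorial_succ, pow_succ]
  push_cast
  field_simp
  ring

theorem F_succ_left_sub (n k : ℕ) : F (n + 1) k - F n k = G n (k + 1) - G n k := by
  rw [F, F, G, G, W_succ_left, W_succ_right]
  push_cast
  field_simp
  ring

theorem W_le_div_choose_sq (n k : ℕ) : W n k ≤ (1 / 4) ^ k / ((n + k).choose n) ^ 2 := by
  have hpoch := poch_le_factorial (x := 1 / 2) (by norm_num) (by norm_num)
  have := poch_pos (one_half_pos (α := ℝ)) n
  have := poch_pos (one_half_pos (α := ℝ)) k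
  calc W n k ≤ (k ! : ℝ) ^ 3 * n ! ^ 2 / (k ! * (n + k)! ^ 2 * 4 ^ k) := by
        unfold W; gcongr <;> apply hpoch
    _ = (1 / 4) ^ k / ((n + k).choose n) ^ 2 := by
        rw [cast_add_choose, one_div_pow]
        field_simp

theorem W_le_quarter_pow (n k : ℕ) : W n k ≤ (1 / 4) ^ k :=
  (W_le_div_choose_sq n k).trans <| div_le_self (by positivity) <|
    one_le_pow₀ <| by exact_mod_cast choose_pos (le_add_right le_rfl)

theorem W_succ_right_le (n k : ℕ) : W n (k + 1) ≤ (1 / 4) ^ (k + 1) / (n + 1) ^ 2 := by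
  refine (W_le_div_choose_sq n (k + 1)).trans <| div_le_div_of_nonneg_left (by positivity)
    (by positivity) <| pow_le_pow_left₀ (by positivity) ?_ 2
  have : (n + 1).choose n ≤ (n + (k + 1)).choose n := choose_le_choose n (by omega)
  rw [choose_succ_self_right] at this
  exact_mod_cast this

theorem F_nonneg (n k : ℕ) : 0 ≤ F n k := by
  have := W_pos n k
  unfold F
  positivity

theorem summable_F (n : ℕ) : Summable (F n) := by
  have hs := summable_linear_mul_geometric (r := 1 / 4) (by norm_num [abs_of_pos]) 6 (4 * n + 1)
  refine hs.of_nonneg_of_le (F_nonneg n) fun k => ?_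
  rw [F, ← add_assoc]
  exact mul_le_mul_of_nonneg_left (W_le_quarter_pow n k) (by positivity)

theorem tendsto_G_zero (n : ℕ) : Tendsto (G n) atTop (𝓝 0) := by
  have hgeom := (summable_pow_mul_geometric_of_norm_lt_one 1 (r := (1 / 4 : ℝ))
    (by norm_num [abs_of_pos])).mul_left 8 |>.tendsto_atTop_zero
  refine squeeze_zero (fun k => by have := W_pos n k; unfold G; positivity) (fun k => ?_) hgeom
  rw [G, pow_one, ← mul_assoc]
  exact mul_le_mul_of_nonneg_left (W_le_quarter_pow n k) (by positivity)

theorem F_zero_right (n : ℕ) : F n 0 = (4 * n + 1) * (poch (1 / 2) n / n !) ^ 2 := by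
  simp [F, W, poch_zero, div_pow]

theorem F_succ_right_le (n k : ℕ) : F n (k + 1) ≤ (6 * k + 7) * (1 / 4) ^ k / (n + 1) := by
  calc F n (k + 1) ≤ (6 * k + 4 * n + 7) * ((1 / 4) ^ (k + 1) / (n + 1) ^ 2) := by
        rw [F, show (6 * ((k + 1 : ℕ) : ℝ) + 4 * n + 1) = 6 * k + 4 * n + 7 by push_cast; ring]
        exact mul_le_mul_of_nonneg_left (W_succ_right_le n k) (by positivity)
    _ ≤ (6 * k + 7) * (1 / 4) ^ k / (n + 1) := by
        rw [pow_succ, mul_div_assoc', div_le_div_iff₀ (by positivity) (by positivity)]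
        have hq : (0 : ℝ) ≤ (1 / 4) ^ k := by positivity
        have hk : (0 : ℝ) ≤ k := k.cast_nonneg
        have hn : (0 : ℝ) ≤ n := n.cast_nonneg
        nlinarith [mul_nonneg (mul_nonneg hq hk) hn, mul_nonneg (mul_nonneg hq hn) hn,
          mul_nonneg (mul_nonneg (mul_nonneg hq hk) hn) hn, mul_nonneg hq hk, mul_nonneg hq hn]

theorem tendsto_tsum_succ_F_zero :
    Tendsto (fun n => ∑' k, F n (k + 1)) atTop (𝓝 0) := by
  have hs := summable_linear_mul_geometric (r := 1 / 4) (by norm_num [abs_of_pos]) 6 7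
  set C := ∑' k : ℕ, (6 * k + 7) * (1 / 4 : ℝ) ^ k
  have hC : Tendsto (fun n : ℕ => C / ((n : ℝ) + 1)) atTop (𝓝 0) := by
    simpa [div_eq_mul_inv] using tendsto_one_div_add_atTop_nhds_zero_nat.const_mul C
  refine squeeze_zero (fun n => tsum_nonneg fun k => F_nonneg n (k + 1)) (fun n => ?_) hC
  rw [← tsum_div_const]
  exact ((summable_nat_add_iff 1).2 (summable_F n)).tsum_le_tsum (F_succ_right_le n)
    (hs.div_const _)

theorem tendsto_tsum_F : Tendsto (fun n => ∑' k, F n k) atTop (𝓝 (4 / π)) := by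
  simpa only [(summable_F _).tsum_eq_zero_add, F_zero_right, add_zero] using
    tendsto_four_mul_add_one_mul_sq.add tendsto_tsum_succ_F_zero

theorem tsum_F_zero_left : ∑' k, F 0 k = 4 / π := by
  have hconst := tsum_eq_tsum_zero_of_wz summable_F F_succ_left_sub (fun n => by simp [G])
    tendsto_G_zero
  simpa only [hconst, tendsto_const_nhds_iff] using tendsto_tsum_F

theorem F_zero_left (k : ℕ) :
    F 0 k = (6 * k + 1) * poch (1 / 2) k ^ 3 / (k ! ^ 3 * 4 ^ k) := by
  simp only [F, W, poch_zero, CharP.cast_eq_zero, zero_add, mul_zero, add_zero]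
  field_simp

end RamanujanWZ

theorem stmt0 :
    ∑' k : ℕ, (6 * (k : ℝ) + 1) * (poch (1/2) k) ^ 3 / ((k.factorial : ℝ) ^ 3 * 4 ^ k)
      = 4 / π := by
  simpa only [RamanujanWZ.F_zero_left] using RamanujanWZ.tsum_F_zero_left
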